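/- Let M : ℝⁿ → ℝⁿ be μ-strongly monotone and L₀-Lipschitz. For α > 0 define the 2×2 symmetric matrix A(α) with entries a₁₁ = α²L₀²/N − 2αμ/N + 1, a₁₂ = a₂₁ = α²LL₀/√N + α(L + σL₀/√N), a₂₂ = α²L² + 2ασ²L + σ², where L ∈ [μ, L₀], σ ∈ (0,1), N ≥ 1. Then there exists ᾱ > 0 (depending on N, L, L₀, μ, σ) such that for all α ∈ (0, ᾱ): a₁₁ ∈ (0,1) and the matrix I₂ − A(α) is positive definite, hence ρ(A(α)) < 1. -/

import Mathlib

/-!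
At `α = 0` the matrix is `diag(1, σ²)`. Writing `a₁₁ = 1 - α g(α)` and `a₁₂ = α c(α)` with
`g(0) = 2μ/N > 0`, the determinant of `I - A(α)` factors as
`α (g(α) (1 - a₂₂(α)) - α c(α)²)`, whose second factor tends to `2μ(1 - σ²)/N > 0`. Hence for
small `α > 0` both `I - A(α)` and `I + A(α)` are positive definite, and for a symmetric matrix
this confines its eigenvalues, which are real, to `(-1, 1)`.
-/

open RealInnerProductSpace

/-- Spectral radius of a real square matrix: supremum of the moduli of its
complex eigenvalues. -/
noncomputable def specRad {n : ℕ} (A : Matrix (Fin n) (Fin n) ℝ) : ℝ :=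
  sSup ((fun z : ℂ => ‖z‖) '' spectrum ℂ (A.map (algebraMap ℝ ℂ)))

open Filter Topology
open scoped ComplexOrder

namespace Matrix

variable {n : Type*} [Fintype n] [DecidableEq n]

theorem PosDef.pos_of_mem_spectrum {𝕜 : Type*} [RCLike 𝕜] {A : Matrix n n 𝕜} (hA : A.PosDef)
    {t : ℝ} (ht : t ∈ spectrum ℝ A) : 0 < t := by
  obtain ⟨i, rfl⟩ := hA.isHermitian.spectrum_real_eq_range_eigenvalues ▸ ht
  exact hA.eigenvalues_pos i

theorem IsHermitian.exists_mem_spectrum_of_mem_spectrum_map {A : Matrix n n ℝ}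
    (hA : A.IsHermitian) {z : ℂ} (hz : z ∈ spectrum ℂ (A.map (algebraMap ℝ ℂ))) :
    ∃ t ∈ spectrum ℝ A, (t : ℂ) = z := by
  have hAℂ : (A.map (algebraMap ℝ ℂ)).IsHermitian := hA.map _ fun x => by simp
  obtain ⟨t, ht, rfl⟩ := hAℂ.spectrum_eq_image_range ▸ hz
  exact ⟨t, AlgHom.spectrum_apply_subset (Algebra.ofId ℝ ℂ).mapMatrix A
    (hAℂ.spectrum_real_eq_range_eigenvalues ▸ ht), rfl⟩

theorem posDef_fin_two {R : Type*} [Field R] [LinearOrder R] [IsStrictOrderedRing R]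
    [StarRing R] [TrivialStar R] {a b d : R} (ha : 0 < a) (hdet : 0 < a * d - b ^ 2) :
    !![a, b; b, d].PosDef := by
  refine PosDef.of_dotProduct_mulVec_pos ?_ fun x hx => ?_
  · ext i j
    fin_cases i <;> fin_cases j <;> simp
  · have hq : star x ⬝ᵥ (!![a, b; b, d] *ᵥ x) =
        a * x 0 ^ 2 + 2 * b * x 0 * x 1 + d * x 1 ^ 2 := by
      simp [dotProduct, mulVec, Fin.sum_univ_two]
      ring
    rw [hq]
    rcases eq_or_ne (x 1) 0 with h₁ | h₁
    · have h₀ : x 0 ≠ 0 := fun h₀ => hx (by ext i; fin_cases i <;> simp [h₀, h₁])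
      rw [h₁]
      nlinarith [sq_pos_of_ne_zero h₀]
    · nlinarith [sq_pos_of_ne_zero h₁, sq_nonneg (a * x 0 + b * x 1)]

end Matrix

theorem specRad_lt_of_forall_norm_lt {m : ℕ} {A : Matrix (Fin m) (Fin m) ℝ} {r : ℝ} (hr : 0 < r)
    (h : ∀ z ∈ spectrum ℂ (A.map (algebraMap ℝ ℂ)), ‖z‖ < r) : specRad A < r := by
  rcases ((fun z : ℂ => ‖z‖) '' spectrum ℂ (A.map (algebraMap ℝ ℂ))).eq_empty_or_nonempty
    with hS | hS
  · rwa [specRad, hS, Real.sSup_empty]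
  · refine (((A.map (algebraMap ℝ ℂ)).finite_spectrum.image _).csSup_lt_iff hS).2 ?_
    rintro _ ⟨z, hz, rfl⟩
    exact h z hz

theorem specRad_lt_one_of_posDef {m : ℕ} {A : Matrix (Fin m) (Fin m) ℝ} (h₁ : (1 - A).PosDef)
    (h₂ : (1 + A).PosDef) : specRad A < 1 := by
  have hA : A.IsHermitian := by simpa using Matrix.isHermitian_one.sub h₁.isHermitian
  refine specRad_lt_of_forall_norm_lt one_pos fun z hz => ?_
  obtain ⟨t, ht, rfl⟩ := hA.exists_mem_spectrum_of_mem_spectrum_map hz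
  have h₁t : 0 < 1 - t := h₁.pos_of_mem_spectrum <| by
    simpa using spectrum.singleton_sub_eq A (1 : ℝ) ▸ Set.sub_mem_sub rfl ht
  have h₂t : 0 < 1 + t := h₂.pos_of_mem_spectrum <| by
    simpa using spectrum.singleton_add_eq A (1 : ℝ) ▸ Set.add_mem_add rfl ht
  rw [Complex.norm_real, Real.norm_eq_abs, abs_lt]
  constructor <;> linarith

theorem eventually_posDef_one_sub_and_one_add {g c d : ℝ → ℝ} (hg : ContinuousAt g 0)
    (hc : ContinuousAt c 0) (hd : ContinuousAt d 0) (hg₀ : 0 < g 0) (hd₀ : |d 0| < 1) :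
    ∀ᶠ α in 𝓝[>] 0, (0 < 1 - α * g α ∧ 1 - α * g α < 1) ∧
      (1 - !![1 - α * g α, α * c α; α * c α, d α]).PosDef ∧
      (1 + !![1 - α * g α, α * c α; α * c α, d α]).PosDef := by
  have eventually_pos {f : ℝ → ℝ} (hf : ContinuousAt f 0) (hf₀ : 0 < f 0) :
      ∀ᶠ α in 𝓝[>] 0, 0 < f α :=
    nhdsWithin_le_nhds (hf.eventually (lt_mem_nhds hf₀))
  obtain ⟨hd₁, hd₂⟩ := abs_lt.1 hd₀
  filter_upwards [self_mem_nhdsWithin, eventually_pos hg hg₀,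
    eventually_pos (f := fun α => 1 - α * g α) (by fun_prop) (by simp),
    eventually_pos (f := fun α => g α * (1 - d α) - α * c α ^ 2) (by fun_prop)
      (by simpa using mul_pos hg₀ (sub_pos.2 hd₂)),
    eventually_pos (f := fun α => (2 - α * g α) * (1 + d α) - (α * c α) ^ 2) (by fun_prop)
      (by simp; linarith)] with α hα hgα ha hdet₁ hdet₂
  refine ⟨⟨ha, by linarith [mul_pos hα hgα]⟩, ?_, ?_⟩
  · rw [Matrix.one_fin_two]
    simp only [Matrix.of_sub_of, Matrix.cons_sub_cons, Matrix.empty_sub_empty, sub_sub_cancel,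
      zero_sub]
    refine Matrix.posDef_fin_two (mul_pos hα hgα) ?_
    nlinarith [mul_pos hα hdet₁]
  · rw [Matrix.one_fin_two]
    simp only [Matrix.of_add_of, Matrix.cons_add_cons, Matrix.empty_add_empty, zero_add]
    refine Matrix.posDef_fin_two (by linarith) ?_
    nlinarith

theorem step_size_matrix_spectral_radius_lt_one_general
    (N : ℕ) (hN : 1 ≤ N)
    (μ L L₀ σ : ℝ) (hμ : 0 < μ)
    (hσ : σ ∈ Set.Ioo (0 : ℝ) 1)
    (A : ℝ → Matrix (Fin 2) (Fin 2) ℝ)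
    (hA : ∀ α, A α =
      !![α ^ 2 * L₀ ^ 2 / N - 2 * α * μ / N + 1,
          α ^ 2 * L * L₀ / Real.sqrt N + α * (L + σ * L₀ / Real.sqrt N);
        α ^ 2 * L * L₀ / Real.sqrt N + α * (L + σ * L₀ / Real.sqrt N),
          α ^ 2 * L ^ 2 + 2 * α * σ ^ 2 * L + σ ^ 2]) :
    ∃ αbar > 0, ∀ α : ℝ, 0 < α → α < αbar →
      (0 < A α 0 0 ∧ A α 0 0 < 1) ∧ (1 - A α).PosDef ∧ specRad (A α) < 1 := by
  have hN₀ : (0 : ℝ) < N := by exact_mod_cast hN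
  obtain ⟨hσ₀, hσ₁⟩ := hσ
  set g : ℝ → ℝ := fun α => (2 * μ - α * L₀ ^ 2) / N
  set c : ℝ → ℝ := fun α => α * L * L₀ / Real.sqrt N + (L + σ * L₀ / Real.sqrt N)
  set d : ℝ → ℝ := fun α => α ^ 2 * L ^ 2 + 2 * α * σ ^ 2 * L + σ ^ 2
  have hA' (α : ℝ) : A α = !![1 - α * g α, α * c α; α * c α, d α] := by
    rw [hA]
    ext i j
    fin_cases i <;> fin_cases j <;> simp [g, c, d] <;> ring
  have hg₀ : 0 < g 0 := div_pos (by simp [hμ]) hN₀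
  have hd₀ : |d 0| < 1 := by simp [d, abs_lt]; constructor <;> nlinarith
  obtain ⟨αbar, hαbar, hsmall⟩ := (nhdsGT_basis 0).eventually_iff.1 <|
    eventually_posDef_one_sub_and_one_add (c := c) (by fun_prop) (by fun_prop) (by fun_prop) hg₀
      hd₀
  refine ⟨αbar, hαbar, fun α hα₀ hα₁ => ?_⟩
  obtain ⟨ha, hsub, hadd⟩ := hsmall ⟨hα₀, hα₁⟩
  rw [hA']
  exact ⟨by simpa using ha, hsub, specRad_lt_one_of_posDef hsub hadd⟩

/-- for the 2×2 symmetric matrix A(α) arising in the convergence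
analysis, there exists ᾱ > 0 such that for all α ∈ (0, ᾱ): a₁₁ ∈ (0,1),
I₂ − A(α) is positive definite, and hence ρ(A(α)) < 1. -/
theorem step_size_matrix_spectral_radius_lt_one
    (d N : ℕ) (hN : 1 ≤ N)
    (M : EuclideanSpace ℝ (Fin d) → EuclideanSpace ℝ (Fin d))
    (μ L L₀ σ : ℝ) (hμ : 0 < μ) (hμL : μ ≤ L) (hLL₀ : L ≤ L₀)
    (hσ : σ ∈ Set.Ioo (0 : ℝ) 1)
    (hmono : ∀ x y, μ * ‖x - y‖ ^ 2 ≤ ⟪x - y, M x - M y⟫)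
    (hlip : ∀ x y, ‖M x - M y‖ ≤ L₀ * ‖x - y‖)
    (A : ℝ → Matrix (Fin 2) (Fin 2) ℝ)
    (hA : ∀ α, A α =
      !![α ^ 2 * L₀ ^ 2 / N - 2 * α * μ / N + 1,
          α ^ 2 * L * L₀ / Real.sqrt N + α * (L + σ * L₀ / Real.sqrt N);
        α ^ 2 * L * L₀ / Real.sqrt N + α * (L + σ * L₀ / Real.sqrt N),
          α ^ 2 * L ^ 2 + 2 * α * σ ^ 2 * L + σ ^ 2]) :
    ∃ αbar > 0, ∀ α : ℝ, 0 < α → α < αbar →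
      (0 < A α 0 0 ∧ A α 0 0 < 1) ∧ (1 - A α).PosDef ∧ specRad (A α) < 1 :=
  step_size_matrix_spectral_radius_lt_one_general N hN μ L L₀ σ hμ hσ A hA
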